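/- arXiv:0807.0874 — 2 statements merged into one kernel-verified Lean document; each statement's English description precedes it below -/
import Mathlib

section
/- Fix real constants m, a and c ≠ 0, and let I ⊆ ℝ be a nonempty open interval such that τ > 0, τ − c > 0 and τ − 2c > 0 for every τ ∈ I. Then the function ψ(τ) = (τ−2c)^{1−a}·(τ−c)^{−m}·τ^{2m−1+a} (real powers) satisfies the homogeneous version of equation (S2) on I, i.e. τ²(τ−c)(2c−τ)ψ''(τ) + [(m−1)τ³ + 2c(1−2m−a)τ² + 2c²(a+2m)τ]ψ'(τ) + 2c(a+2m−1)(τ−2c)ψ(τ) = 0 for every τ ∈ I. -/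
/-- ψ(τ) = (τ−2c)^{1−a}·(τ−c)^{−m}·τ^{2m−1+a}, with real powers. -/
noncomputable def psiFun (m a c : ℝ) : ℝ → ℝ := fun τ =>
  (τ - 2*c) ^ (1 - a) * (τ - c) ^ (-m) * τ ^ (2*m - 1 + a)

/-- Logarithmic derivative of ψ. -/
noncomputable def gFun (m a c : ℝ) : ℝ → ℝ := fun τ =>
  (1-a)/(τ-2*c) - m/(τ-c) + (2*m-1+a)/τ

lemma hasDerivAt_psi (m a c τ : ℝ) (h0 : 0 < τ) (h1 : 0 < τ - c) (h2 : 0 < τ - 2*c) :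
    HasDerivAt (psiFun m a c) (psiFun m a c τ * gFun m a c τ) τ := by
  have hA : HasDerivAt (fun t : ℝ => (t - 2*c) ^ (1-a))
      (1 * (1-a) * (τ - 2*c) ^ (1-a-1)) τ :=
    ((hasDerivAt_id τ).sub_const (2*c)).rpow_const (Or.inl h2.ne')
  have hB : HasDerivAt (fun t : ℝ => (t - c) ^ (-m))
      (1 * (-m) * (τ - c) ^ (-m-1)) τ :=
    ((hasDerivAt_id τ).sub_const c).rpow_const (Or.inl h1.ne')
  have hC : HasDerivAt (fun t : ℝ => t ^ (2*m-1+a))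
      (1 * (2*m-1+a) * τ ^ (2*m-1+a-1)) τ :=
    (hasDerivAt_id τ).rpow_const (Or.inl h0.ne')
  have h := (hA.mul hB).mul hC
  refine h.congr_deriv ?_
  simp only [psiFun, gFun, Pi.mul_apply]
  rw [show (1-a-1 : ℝ) = (1-a) - 1 by ring, show (-m-1 : ℝ) = -m - 1 by ring,
    show (2*m-1+a-1 : ℝ) = (2*m-1+a) - 1 by ring,
    Real.rpow_sub_one h2.ne', Real.rpow_sub_one h1.ne', Real.rpow_sub_one h0.ne']
  field_simp
  ring

lemma hasDerivAt_g (m a c τ : ℝ) (h0 : 0 < τ) (h1 : 0 < τ - c) (h2 : 0 < τ - 2*c) :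
    HasDerivAt (gFun m a c)
      (-(1-a)/(τ-2*c)^2 + m/(τ-c)^2 - (2*m-1+a)/τ^2) τ := by
  have hA : HasDerivAt (fun t : ℝ => (1-a)/(t-2*c))
      ((0 * (τ-2*c) - (1-a) * 1) / (τ-2*c)^2) τ :=
    (hasDerivAt_const τ (1-a)).div ((hasDerivAt_id τ).sub_const (2*c)) h2.ne'
  have hB : HasDerivAt (fun t : ℝ => m/(t-c))
      ((0 * (τ-c) - m * 1) / (τ-c)^2) τ :=
    (hasDerivAt_const τ m).div ((hasDerivAt_id τ).sub_const c) h1.ne'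
  have hC : HasDerivAt (fun t : ℝ => (2*m-1+a)/t)
      ((0 * τ - (2*m-1+a) * 1) / τ^2) τ :=
    (hasDerivAt_const τ (2*m-1+a)).div (hasDerivAt_id τ) h0.ne'
  have h := (hA.sub hB).add hC
  refine h.congr_deriv ?_
  ring

/-- On an interval where τ, τ−c and τ−2c are positive, ψ solves the
homogeneous version of equation (S2). -/
theorem psi_solves_homogeneous_S2 (m a c : ℝ) (hc : c ≠ 0)
    (I : Set ℝ) (hIopen : IsOpen I) (hIconn : I.OrdConnected) (hIne : I.Nonempty)
    (hpos : ∀ τ ∈ I, 0 < τ ∧ 0 < τ - c ∧ 0 < τ - 2*c) :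
    ∀ τ ∈ I,
      τ^2*(τ-c)*(2*c-τ) * deriv (deriv (psiFun m a c)) τ
        + ((m-1)*τ^3 + 2*c*(1-2*m-a)*τ^2 + 2*c^2*(a+2*m)*τ) * deriv (psiFun m a c) τ
        + 2*c*(a+2*m-1)*(τ-2*c) * psiFun m a c τ = 0 := by
  intro τ hτ
  obtain ⟨h0, h1, h2⟩ := hpos τ hτ
  have hψ := hasDerivAt_psi m a c τ h0 h1 h2
  have hg := hasDerivAt_g m a c τ h0 h1 h2
  have hd1 : deriv (psiFun m a c) τ = psiFun m a c τ * gFun m a c τ := hψ.deriv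
  have hev : deriv (psiFun m a c) =ᶠ[nhds τ] (fun t => psiFun m a c t * gFun m a c t) := by
    filter_upwards [hIopen.mem_nhds hτ] with t ht
    obtain ⟨k0, k1, k2⟩ := hpos t ht
    exact (hasDerivAt_psi m a c t k0 k1 k2).deriv
  have hd2 : deriv (deriv (psiFun m a c)) τ
      = psiFun m a c τ * gFun m a c τ * gFun m a c τ
        + psiFun m a c τ * (-(1-a)/(τ-2*c)^2 + m/(τ-c)^2 - (2*m-1+a)/τ^2) := by
    rw [hev.deriv_eq]
    exact (hψ.mul hg).deriv
  rw [hd1, hd2]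
  have key : τ^2*(τ-c)*(2*c-τ) * (gFun m a c τ * gFun m a c τ
        + (-(1-a)/(τ-2*c)^2 + m/(τ-c)^2 - (2*m-1+a)/τ^2))
      + ((m-1)*τ^3 + 2*c*(1-2*m-a)*τ^2 + 2*c^2*(a+2*m)*τ) * gFun m a c τ
      + 2*c*(a+2*m-1)*(τ-2*c) = 0 := by
    simp only [gFun]
    have e0 := h0.ne'; have e1 := h1.ne'; have e2 : τ - c*2 ≠ 0 := by intro h; linarith
    field_simp
    ring
  linear_combination psiFun m a c τ * key
end

section
/- Fix real constants m, a, κ, λ with c ≠ 0, m ≠ 0, a + 2m − 1 ≠ 0, and suppose the compatibility condition κ/(2m) = λ/(2c(a+2m−1)) holds. Let I ⊆ ℝ be a nonempty open interval such that τ > 0, τ − c > 0 and τ − 2c > 0 for every τ ∈ I. Then for every real constant C₂, the function φ(τ) = κ/(2m) + C₂·(τ−2c)^{1−a}·(τ−c)^{−m}·τ^{2m−1+a} satisfies both equations (S1) and (S2) at every point of I. -/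
/-- The general-solution candidate φ(τ) = κ/(2m) + C₂·ψ(τ). -/
noncomputable def phiSol (m a c κ C₂ : ℝ) : ℝ → ℝ := fun τ =>
  κ/(2*m) + C₂ * psiFun m a c τ

/-- Logarithmic derivative of ψ. -/
noncomputable def Efun (m a c : ℝ) (τ : ℝ) : ℝ :=
  (1-a)/(τ-2*c) - m/(τ-c) + (2*m-1+a)/τ

lemma hasDerivAt_rpow_shift (p d τ : ℝ) (h : 0 < τ - d) :
    HasDerivAt (fun x : ℝ => (x - d) ^ p) (p * (τ - d) ^ p / (τ - d)) τ := by
  have h1 : HasDerivAt (fun x : ℝ => x - d) 1 τ := (hasDerivAt_id τ).sub_const d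
  have h2 := (Real.hasDerivAt_rpow_const (x := τ - d) (p := p) (Or.inl h.ne')).comp τ h1
  refine h2.congr_deriv ?_
  rw [Real.rpow_sub h, Real.rpow_one]
  ring

lemma hasDerivAt_psiFun (m a c τ : ℝ) (h0 : 0 < τ) (h1 : 0 < τ - c) (h2 : 0 < τ - 2*c) :
    HasDerivAt (psiFun m a c) (psiFun m a c τ * Efun m a c τ) τ := by
  have d1 := hasDerivAt_rpow_shift (1-a) (2*c) τ h2
  have d2 := hasDerivAt_rpow_shift (-m) c τ h1
  have d3 : HasDerivAt (fun x : ℝ => x ^ (2*m-1+a)) ((2*m-1+a) * τ ^ (2*m-1+a) / τ) τ := by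
    simpa using hasDerivAt_rpow_shift (2*m-1+a) 0 τ (by simpa using h0)
  have h := (d1.mul d2).mul d3
  refine h.congr_deriv ?_
  unfold psiFun Efun
  simp only [Pi.mul_apply]
  field_simp
  ring

lemma hasDerivAt_Efun (m a c τ : ℝ) (h0 : 0 < τ) (h1 : 0 < τ - c) (h2 : 0 < τ - 2*c) :
    HasDerivAt (Efun m a c)
      (-(1-a)/(τ-2*c)^2 + m/(τ-c)^2 - (2*m-1+a)/τ^2) τ := by
  have i1 : HasDerivAt (fun x : ℝ => (1-a)/(x-2*c)) (-(1-a)/(τ-2*c)^2) τ := by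
    have := (((hasDerivAt_id τ).sub_const (2*c)).inv h2.ne').const_mul (1-a)
    refine this.congr_deriv ?_
    simp only [id]; ring
  have i2 : HasDerivAt (fun x : ℝ => m/(x-c)) (-m/(τ-c)^2) τ := by
    have := (((hasDerivAt_id τ).sub_const c).inv h1.ne').const_mul m
    refine this.congr_deriv ?_
    simp only [id]; ring
  have i3 : HasDerivAt (fun x : ℝ => (2*m-1+a)/x) (-(2*m-1+a)/τ^2) τ := by
    have := ((hasDerivAt_id τ).inv h0.ne').const_mul (2*m-1+a)
    refine this.congr_deriv ?_
    simp only [id]; ring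
  have h := (i1.sub i2).add i3
  refine h.congr_deriv ?_
  ring

/-- Under the compatibility condition κ/(2m) = λ/(2c(a+2m−1)), the function
φ = κ/(2m) + C₂ψ satisfies both (S1) and (S2) on any interval where
τ, τ−c and τ−2c are positive. -/
theorem general_solution_satisfies_S1_S2
    (m a c κ lam : ℝ) (hc : c ≠ 0) (hm : m ≠ 0) (hconst : a + 2*m - 1 ≠ 0)
    (hcompat : κ/(2*m) = lam/(2*c*(a+2*m-1)))
    (I : Set ℝ) (hIopen : IsOpen I) (hIconn : I.OrdConnected) (hIne : I.Nonempty)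
    (hpos : ∀ τ ∈ I, 0 < τ ∧ 0 < τ - c ∧ 0 < τ - 2*c)
    (C₂ : ℝ) :
    ∀ τ ∈ I,
      (τ*(τ-c)^2*(2*c-τ) * deriv (deriv (phiSol m a c κ C₂)) τ
        + ((m-2)*τ^3 + c*(8-5*m-2*a)*τ^2 + 2*c^2*(2*a+4*m-5)*τ
            - 2*c^3*(2*m-2+a)) * deriv (phiSol m a c κ C₂) τ
        + m*τ*(τ-2*c) * phiSol m a c κ C₂ τ = κ*τ*(τ-2*c)/2)
      ∧
      (τ^2*(τ-c)*(2*c-τ) * deriv (deriv (phiSol m a c κ C₂)) τ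
        + ((m-1)*τ^3 + 2*c*(1-2*m-a)*τ^2 + 2*c^2*(a+2*m)*τ)
            * deriv (phiSol m a c κ C₂) τ
        + 2*c*(a+2*m-1)*(τ-2*c) * phiSol m a c κ C₂ τ = lam*(τ-2*c)) := by
  have hphi : ∀ t ∈ I, HasDerivAt (phiSol m a c κ C₂)
      (C₂ * (psiFun m a c t * Efun m a c t)) t := by
    intro t ht
    obtain ⟨p0, p1, p2⟩ := hpos t ht
    exact ((hasDerivAt_psiFun m a c t p0 p1 p2).const_mul C₂).const_add (κ/(2*m))
  intro τ hτ
  obtain ⟨p0, p1, p2⟩ := hpos τ hτ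
  have hd1 : deriv (phiSol m a c κ C₂) τ
      = C₂ * (psiFun m a c τ * Efun m a c τ) := (hphi τ hτ).deriv
  have heq : deriv (phiSol m a c κ C₂)
      =ᶠ[nhds τ] fun t => C₂ * (psiFun m a c t * Efun m a c t) := by
    filter_upwards [hIopen.mem_nhds hτ] with t ht
    exact (hphi t ht).deriv
  have hd2 : deriv (deriv (phiSol m a c κ C₂)) τ
      = C₂ * (psiFun m a c τ * Efun m a c τ * Efun m a c τ
          + psiFun m a c τ * (-(1-a)/(τ-2*c)^2 + m/(τ-c)^2 - (2*m-1+a)/τ^2)) := by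
    rw [heq.deriv_eq]
    exact (((hasDerivAt_psiFun m a c τ p0 p1 p2).mul
      (hasDerivAt_Efun m a c τ p0 p1 p2)).const_mul C₂).deriv
  have h0 := p0.ne'
  have h1 := p1.ne'
  have h2 := p2.ne'
  have h2' : τ - c * 2 ≠ 0 := by rw [mul_comm]; exact h2
  have hden : (2:ℝ)*c*(a+2*m-1) ≠ 0 := by
    simp only [mul_ne_zero_iff]
    exact ⟨⟨two_ne_zero, hc⟩, hconst⟩
  have hkl : κ * (c*(a+2*m-1)) = lam * m := by
    field_simp at hcompat
    linarith [hcompat]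
  set P := psiFun m a c τ with hP
  constructor
  · rw [hd1, hd2]
    show _ + _ + m*τ*(τ-2*c) * (κ/(2*m) + C₂ * P) = _
    rw [Efun]
    field_simp
    ring
  · rw [hd1, hd2]
    show _ + _ + 2*c*(a+2*m-1)*(τ-2*c) * (κ/(2*m) + C₂ * P) = _
    rw [Efun, hcompat]
    field_simp
    ring
end
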